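/- For every natural number n, σ( u·fⁿ ) = (u + v)·fⁿ, where σ is the coefficient shift on (ZMod 2)⟦X⟧; moreover σ(v) = u, and for every n ≥ 1, σ( v·fⁿ ) = u·φ_{n-1}(f) + v·φ_n(f), where φ_0 = 0 and φ_m = ∑_{i=1}^{m} Yⁱ for m ≥ 1, and φ_m(f) denotes evaluation at f. -/

import Mathlib

open PowerSeries

noncomputable section

/-- The multiplier `f = (1+X+X²)·(1+X²)⁻¹` in `(ZMod 2)⟦X⟧`. -/
def f : PowerSeries (ZMod 2) := (1 + X + X ^ 2) * (1 + X ^ 2)⁻¹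

/-- `u = X·(1+X+X²)⁻¹`, the translation part of `x`. -/
def u : PowerSeries (ZMod 2) := X * (1 + X + X ^ 2)⁻¹

/-- `v = (1+X)·(1+X+X²)⁻¹`, the translation part of `z`. -/
def v : PowerSeries (ZMod 2) := (1 + X) * (1 + X + X ^ 2)⁻¹

/-- The coefficient shift `σ` on power series: `coeff n (σ g) = coeff (n+1) g`. -/
def shift (g : PowerSeries (ZMod 2)) : PowerSeries (ZMod 2) :=
  PowerSeries.mk fun n => coeff (n + 1) g

/-- `φ_0 = 0` and `φ_n = ∑_{i=1}^n Yⁱ` for `n ≥ 1`, in `(ZMod 2)[Y]`. -/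
def phi (n : ℕ) : Polynomial (ZMod 2) := ∑ i ∈ Finset.Icc 1 n, Polynomial.X ^ i

/-- For `q = ∑_{i=0}^n c_i Yⁱ` in `(ZMod 2)[Y]` (with `n` the degree of `q`),
`ψ_q = ∑_{i=1}^n c_i φ_{i-1}`. -/
def psi (q : Polynomial (ZMod 2)) : Polynomial (ZMod 2) :=
  ∑ i ∈ Finset.Icc 1 q.natDegree, Polynomial.C (q.coeff i) * phi (i - 1)

end

/-!
Computing `shift g` amounts to writing `g = c + X * h`, an identity between rational functions
in `X` over `𝔽₂`. The `φ`-part is a geometric sum: `u * f = f - 1` gives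
`u * φ_m(f) = f ^ m - 1`. For the `v`-part, `v * f = (1 + X)⁻¹ = 1 + X + X² + ⋯` is fixed by the
shift and `v * f * u = X * (u + v * f)`, whence
`v * f ^ (m + 1) = 1 + X * (u * φ_m(f) + v * φ_{m+1}(f))`.
-/

instance : CharP (ZMod 2)⟦X⟧ 2 :=
  charP_of_injective_ringHom C_injective 2

theorem shift_C_add_X_mul (c : ZMod 2) (g : (ZMod 2)⟦X⟧) : shift (C c + X * g) = g := by
  ext n
  simp [shift, coeff_succ_X_mul]

theorem shift_X_mul (g : (ZMod 2)⟦X⟧) : shift (X * g) = g := by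
  simpa using shift_C_add_X_mul 0 g

theorem shift_one_add_X_mul (g : (ZMod 2)⟦X⟧) : shift (1 + X * g) = g := by
  simpa using shift_C_add_X_mul 1 g

theorem phi_eq_X_mul_geom_sum (m : ℕ) :
    phi m = Polynomial.X * ∑ i ∈ Finset.range m, Polynomial.X ^ i := by
  rw [phi, ← Finset.Ico_add_one_right_eq_Icc, Finset.sum_Ico_eq_sum_range, Finset.mul_sum]
  simp [pow_succ', add_comm 1]

theorem phi_succ (m : ℕ) : phi (m + 1) = Polynomial.X * (1 + phi m) := by
  rw [phi_eq_X_mul_geom_sum, phi_eq_X_mul_geom_sum, Finset.sum_range_succ', Finset.mul_sum]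
  simp [pow_succ', add_comm]

theorem one_add_X_add_X_sq_mul_inv :
    (1 + X + X ^ 2 : (ZMod 2)⟦X⟧) * (1 + X + X ^ 2)⁻¹ = 1 :=
  PowerSeries.mul_inv_cancel _ (by simp)

theorem one_add_X_sq_mul_inv : (1 + X ^ 2 : (ZMod 2)⟦X⟧) * (1 + X ^ 2)⁻¹ = 1 :=
  PowerSeries.mul_inv_cancel _ (by simp)

theorem u_eq_X_mul_u_add_v : u = X * (u + v) := by
  unfold u v
  linear_combination (-X ^ 2 * (1 + X + X ^ 2)⁻¹) * CharTwo.two_eq_zero (R := (ZMod 2)⟦X⟧)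

theorem v_eq_one_add_X_mul_u : v = 1 + X * u := by
  unfold u v
  linear_combination one_add_X_add_X_sq_mul_inv
    - (X ^ 2 * (1 + X + X ^ 2)⁻¹) * CharTwo.two_eq_zero (R := (ZMod 2)⟦X⟧)

theorem u_mul_f : u * f = f - 1 := by
  unfold f u
  linear_combination (X * (1 + X ^ 2)⁻¹) * one_add_X_add_X_sq_mul_inv - one_add_X_sq_mul_inv

theorem f_pow_eq_one_add_u_mul_aeval_phi (m : ℕ) :
    f ^ m = 1 + u * Polynomial.aeval f (phi m) := by
  rw [phi_eq_X_mul_geom_sum, map_mul, Polynomial.aeval_X, ← mul_assoc, u_mul_f, map_sum]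
  simp only [map_pow, Polynomial.aeval_X]
  rw [mul_comm, geom_sum_mul]
  ring

theorem v_mul_f : v * f = (1 + X) * (1 + X ^ 2)⁻¹ := by
  unfold v f
  linear_combination ((1 + X) * (1 + X ^ 2)⁻¹) * one_add_X_add_X_sq_mul_inv

theorem v_mul_f_eq_one_add_X_mul : v * f = 1 + X * (v * f) := by
  rw [v_mul_f]
  linear_combination one_add_X_sq_mul_inv
    - (X ^ 2 * (1 + X ^ 2)⁻¹) * CharTwo.two_eq_zero (R := (ZMod 2)⟦X⟧)

theorem v_mul_f_mul_u : v * f * u = X * (u + v * f) := by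
  rw [v_mul_f]
  unfold u
  linear_combination (X * (1 + X) * (1 + X ^ 2)⁻¹) * one_add_X_add_X_sq_mul_inv
    + (X ^ 2 * (1 + X + X ^ 2)⁻¹) * one_add_X_sq_mul_inv
    - (X ^ 2 * (1 + X + X ^ 2) * (1 + X ^ 2)⁻¹ * (1 + X + X ^ 2)⁻¹)
      * CharTwo.two_eq_zero (R := (ZMod 2)⟦X⟧)

/-- Section formulas for `x^{aⁿ}` and `z^{aⁿ}` in power-series form:
`σ(u·fⁿ) = (u+v)·fⁿ` for all `n`, `σ(v) = u`, and
`σ(v·fⁿ) = u·φ_{n-1}(f) + v·φ_n(f)` for all `n ≥ 1`. -/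
theorem shift_powers :
    (∀ n : ℕ, shift (u * f ^ n) = (u + v) * f ^ n) ∧
    shift v = u ∧
    (∀ n : ℕ, 1 ≤ n →
      shift (v * f ^ n) =
        u * Polynomial.aeval f (phi (n - 1)) + v * Polynomial.aeval f (phi n)) := by
  refine ⟨fun n => ?_, ?_, fun n hn => ?_⟩
  · conv_lhs => rw [u_eq_X_mul_u_add_v, mul_assoc]
    rw [shift_X_mul]
  · rw [v_eq_one_add_X_mul_u, shift_one_add_X_mul]
  · obtain ⟨m, rfl⟩ := Nat.exists_eq_add_of_le' hn
    have key : v * f ^ (m + 1) = 1 + X * (u * Polynomial.aeval f (phi m)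
        + v * Polynomial.aeval f (phi (m + 1))) := by
      rw [phi_succ, map_mul, map_add, map_one, Polynomial.aeval_X]
      linear_combination (v * f) * f_pow_eq_one_add_u_mul_aeval_phi m
        + v_mul_f_eq_one_add_X_mul + Polynomial.aeval f (phi m) * v_mul_f_mul_u
    rw [Nat.add_sub_cancel, key, shift_one_add_X_mul]
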